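/- arXiv:2106.10079 — 2 statements merged into one kernel-verified Lean document; each statement's English description precedes it below -/
import Mathlib

section
/- Let a_1,…,a_d be positive integers, W := {(k_1/a_1, …, k_d/a_d) mod ℤ^d : 0 ≤ k_i ≤ a_i − 1} ⊂ 𝕋^d, assumed invariant under A, and let ε > 0 be such that p is injective on B(0, ε·max(‖A‖, ‖A^{−1}‖)). Then there exist constants c₁, c₂ > 0 such that for all sufficiently large integers n coprime with every a_i the following holds: let ρ ∈ (ℤ/nℤ)^d ∖ {0} (identified with its representative in {0,…,n−1}^d), and let y ∈ 𝕋^d be either a point of W, or y = ρ'/n for some ρ' ∈ (ℤ/nℤ)^d ∖ {0} with ρ'/n ≠ ρ/n in 𝕋^d. Then either d(ρ/n, y) ≥ ε, or, writing v for the unique representative of ρ/n − y in B(0, ε) ⊆ ℝ^d and v = v_s + v_u with v_s ∈ E_s, v_u ∈ E_u, one has ‖v_u‖ ≥ c₁/n^{c₂}. -/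
noncomputable section

open scoped BigOperators

/-- The integer lattice `ℤ^d` inside `ℝ^d`. -/
def intLattice (d : ℕ) : AddSubgroup (Fin d → ℝ) :=
  AddSubgroup.pi Set.univ fun _ => AddSubgroup.zmultiples (1 : ℝ)

/-- The torus `𝕋^d = ℝ^d / ℤ^d`. -/
abbrev Torus (d : ℕ) := (Fin d → ℝ) ⧸ intLattice d

/-- The natural projection `p : ℝ^d → 𝕋^d`. -/
def Tproj (d : ℕ) : (Fin d → ℝ) →+ Torus d := QuotientAddGroup.mk' (intLattice d)

/-- The real matrix obtained from an integer matrix. -/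
def matR {d : ℕ} (A : Matrix (Fin d) (Fin d) ℤ) : Matrix (Fin d) (Fin d) ℝ :=
  A.map (Int.cast : ℤ → ℝ)

lemma intLattice_mapsTo {d : ℕ} (A : Matrix (Fin d) (Fin d) ℤ) :
    intLattice d ≤ (intLattice d).comap (matR A).mulVecLin.toAddMonoidHom := by
  intro x hx
  rw [AddSubgroup.mem_comap]
  rw [intLattice, AddSubgroup.mem_pi] at hx ⊢
  intro i _
  rw [AddSubgroup.mem_zmultiples_iff]
  choose k hk using fun j => AddSubgroup.mem_zmultiples_iff.mp (hx j (Set.mem_univ j))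
  have hx' : ∀ j, (k j : ℝ) = x j := by
    intro j
    have := hk j
    rwa [zsmul_eq_mul, mul_one] at this
  refine ⟨∑ j, A i j * k j, ?_⟩
  rw [zsmul_eq_mul, mul_one]
  have : (matR A).mulVecLin.toAddMonoidHom x i = ∑ j, (A i j : ℝ) * x j := by
    simp [matR, Matrix.mulVecLin_apply, Matrix.mulVec, dotProduct]
  rw [this]
  push_cast
  exact Finset.sum_congr rfl fun j _ => by rw [hx' j]

/-- The map on the torus induced by an integer matrix. -/
def tmap {d : ℕ} (A : Matrix (Fin d) (Fin d) ℤ) : Torus d →+ Torus d :=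
  QuotientAddGroup.map (intLattice d) (intLattice d)
    (matR A).mulVecLin.toAddMonoidHom (intLattice_mapsTo A)

/-- `iterZ A B k` is the `k`-th power (`k ∈ ℤ`) of the toral automorphism induced by `A`,
where `B` is the integer inverse of `A`. -/
def iterZ {d : ℕ} (A B : Matrix (Fin d) (Fin d) ℤ) (k : ℤ) (x : Torus d) : Torus d :=
  if 0 ≤ k then (⇑(tmap A))^[k.toNat] x else (⇑(tmap B))^[(-k).toNat] x

/-- The quotient "metric" on the torus induced by a norm `N` on `ℝ^d`. -/
def qdist {d : ℕ} (N : (Fin d → ℝ) → ℝ) (x y : Torus d) : ℝ :=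
  sInf (N '' {v | Tproj d v = x - y})

/-- A norm on `ℝ^d` adapted to the hyperbolic matrix `A` (with integer inverse `B`),
together with the stable/unstable splitting. -/
structure AdaptedNorm (d : ℕ) (A B : Matrix (Fin d) (Fin d) ℤ) where
  N : (Fin d → ℝ) → ℝ
  Es : Submodule ℝ (Fin d → ℝ)
  Eu : Submodule ℝ (Fin d → ℝ)
  compl : IsCompl Es Eu
  EsInvA : ∀ v ∈ Es, (matR A).mulVec v ∈ Es
  EuInvA : ∀ v ∈ Eu, (matR A).mulVec v ∈ Eu
  EsInvB : ∀ v ∈ Es, (matR B).mulVec v ∈ Es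
  EuInvB : ∀ v ∈ Eu, (matR B).mulVec v ∈ Eu
  nonneg : ∀ v, 0 ≤ N v
  eq_zero_iff : ∀ v, N v = 0 ↔ v = 0
  norm_smul : ∀ (c : ℝ) (v), N (c • v) = |c| * N v
  triangle : ∀ v w, N (v + w) ≤ N v + N w
  adapted : ∀ vs ∈ Es, ∀ vu ∈ Eu, N (vs + vu) = max (N vs) (N vu)
  lam : ℝ
  lam_nonneg : 0 ≤ lam
  lam_lt_one : lam < 1
  contract_s : ∀ v ∈ Es, N ((matR A).mulVec v) ≤ lam * N v
  contract_u : ∀ v ∈ Eu, N ((matR B).mulVec v) ≤ lam * N v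
  cA : ℝ
  cB : ℝ
  boundA : ∀ v, N ((matR A).mulVec v) ≤ cA * N v
  boundB : ∀ v, N ((matR B).mulVec v) ≤ cB * N v

/-- Hyperbolicity: no complex eigenvalue of modulus 1. -/
def IsHyperbolic {d : ℕ} (A : Matrix (Fin d) (Fin d) ℤ) : Prop :=
  ∀ z : ℂ, ((A.map (Int.cast : ℤ → ℂ)).charpoly).IsRoot z → ‖z‖ ≠ 1

/-- Local stable set `W^s_ε(x)` for the toral map induced by `A`
(taking `A` to be the inverse matrix gives the local unstable set). -/
def Wstable {d : ℕ} (A : Matrix (Fin d) (Fin d) ℤ) (N : (Fin d → ℝ) → ℝ) (ε : ℝ)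
    (x : Torus d) : Set (Torus d) :=
  {y | ∀ n : ℕ, qdist N ((⇑(tmap A))^[n] x) ((⇑(tmap A))^[n] y) ≤ ε}

/-- A rectangle: a set of diameter at most `ε` stable under the local product `[x,y]`. -/
def IsRectangle {d : ℕ} (A B : Matrix (Fin d) (Fin d) ℤ) (N : (Fin d → ℝ) → ℝ) (ε : ℝ)
    (R : Set (Torus d)) : Prop :=
  (∀ x ∈ R, ∀ y ∈ R, qdist N x y ≤ ε) ∧
  (∀ x ∈ R, ∀ y ∈ R, ∀ z, z ∈ Wstable A N ε x ∩ Wstable B N ε y → z ∈ R)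

/-- A Markov partition for the toral automorphism induced by `A` (with inverse `B`). -/
structure IsMarkovPartition {d m : ℕ} (A B : Matrix (Fin d) (Fin d) ℤ)
    (N : (Fin d → ℝ) → ℝ) (ε : ℝ) (R : Fin m → Set (Torus d)) : Prop where
  cover : (⋃ i, R i) = Set.univ
  rect : ∀ i, IsRectangle A B N ε (R i)
  proper : ∀ i, R i = closure (interior (R i))
  disj : ∀ i j, i ≠ j → interior (R i) ∩ interior (R j) = ∅
  markov_s : ∀ i j, ∀ x ∈ interior (R i), tmap A x ∈ interior (R j) →
      (⇑(tmap A)) '' (Wstable A N ε x ∩ R i) ⊆ Wstable A N ε (tmap A x) ∩ R j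
  markov_u : ∀ i j, ∀ x ∈ interior (R i), tmap A x ∈ interior (R j) →
      Wstable B N ε (tmap A x) ∩ R j ⊆ (⇑(tmap A)) '' (Wstable B N ε x ∩ R i)

/-- The adjacency relation of a Markov partition: `𝒜_{ij} = 1` iff
`int(R_i) ∩ A⁻¹(int(R_j)) ≠ ∅`. -/
def adjacent {d m : ℕ} (A : Matrix (Fin d) (Fin d) ℤ) (R : Fin m → Set (Torus d))
    (i j : Fin m) : Prop :=
  (interior (R i) ∩ (⇑(tmap A)) ⁻¹' interior (R j)).Nonempty

/-- The shift space `Ω` of bi-infinite admissible sequences. -/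
def shiftSpace {d m : ℕ} (A : Matrix (Fin d) (Fin d) ℤ) (R : Fin m → Set (Torus d)) :
    Set (ℤ → Fin m) :=
  {ω | ∀ k : ℤ, adjacent A R (ω k) (ω (k + 1))}

/-- The shift map `θ`. -/
def shiftMap {m : ℕ} (ω : ℤ → Fin m) : ℤ → Fin m := fun k => ω (k + 1)


/-- The finite set `W = {(k_1/a_1, …, k_d/a_d) mod ℤ^d}` of rational points of the torus. -/
def ratPoints (d : ℕ) (a : Fin d → ℤ) : Set (Torus d) :=
  {w | ∃ kv : Fin d → ℤ, w = Tproj d (fun i => (kv i : ℝ) / (a i : ℝ))}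

/-- The point `ρ/n` of the torus associated with `ρ ∈ (ℤ/nℤ)^d`. -/
def zmodPoint (d n : ℕ) (ρ : Fin d → ZMod n) : Torus d :=
  Tproj d (fun i => ((ρ i).val : ℝ) / (n : ℝ))


section Statement14Aux

variable {d : ℕ} {A B : Matrix (Fin d) (Fin d) ℤ}

lemma aux_N_zero (𝔑 : AdaptedNorm d A B) : 𝔑.N 0 = 0 := (𝔑.eq_zero_iff 0).2 rfl

lemma aux_N_neg (𝔑 : AdaptedNorm d A B) (v : Fin d → ℝ) : 𝔑.N (-v) = 𝔑.N v := by
  have h := 𝔑.norm_smul (-1) v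
  simpa using h

lemma aux_N_sum (𝔑 : AdaptedNorm d A B) {ι : Type} (s : Finset ι) (f : ι → Fin d → ℝ) :
    𝔑.N (∑ i ∈ s, f i) ≤ ∑ i ∈ s, 𝔑.N (f i) := by
  classical
  induction s using Finset.induction with
  | empty => simp [aux_N_zero]
  | insert _ _ hi ih =>
      rw [Finset.sum_insert hi, Finset.sum_insert hi]
      exact (𝔑.triangle _ _).trans (by linarith)

lemma aux_N_le (𝔑 : AdaptedNorm d A B) :
    ∃ C : ℝ, 0 ≤ C ∧ ∀ v, 𝔑.N v ≤ C * ‖v‖ := by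
  refine ⟨∑ i, 𝔑.N (Pi.single i 1), Finset.sum_nonneg fun i _ => 𝔑.nonneg _, fun v => ?_⟩
  calc 𝔑.N v = 𝔑.N (∑ i, Pi.single i (v i)) := by rw [Finset.univ_sum_single]
    _ ≤ ∑ i, 𝔑.N (Pi.single i (v i)) := aux_N_sum 𝔑 _ _
    _ ≤ ∑ i, 𝔑.N (Pi.single i 1) * ‖v‖ := by
        refine Finset.sum_le_sum fun i _ => ?_
        have h1 : Pi.single i (v i) = (v i) • (Pi.single i (1:ℝ) : Fin d → ℝ) := by
          funext j
          by_cases h : j = i <;> simp [Pi.single_apply, h]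
        rw [h1, 𝔑.norm_smul, mul_comm]
        have h2 : |v i| ≤ ‖v‖ := by
          simpa [Real.norm_eq_abs] using norm_le_pi_norm v i
        exact mul_le_mul_of_nonneg_left h2 (𝔑.nonneg _)
    _ = (∑ i, 𝔑.N (Pi.single i 1)) * ‖v‖ := by rw [Finset.sum_mul]

lemma aux_N_cont (𝔑 : AdaptedNorm d A B) : Continuous 𝔑.N := by
  obtain ⟨C, hC0, hC⟩ := aux_N_le 𝔑
  have hlip : LipschitzWith (Real.toNNReal C) 𝔑.N := by
    apply LipschitzWith.of_dist_le_mul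
    intro x y
    rw [Real.dist_eq, dist_eq_norm]
    have h1 : 𝔑.N x - 𝔑.N y ≤ 𝔑.N (x - y) := by
      have h := 𝔑.triangle (x - y) y
      rw [sub_add_cancel] at h
      linarith
    have h2 : 𝔑.N y - 𝔑.N x ≤ 𝔑.N (x - y) := by
      have h := 𝔑.triangle (y - x) x
      rw [sub_add_cancel] at h
      have h4 : 𝔑.N (y - x) = 𝔑.N (x - y) := by rw [← neg_sub x y, aux_N_neg]
      linarith
    have habs : |𝔑.N x - 𝔑.N y| ≤ 𝔑.N (x - y) := abs_sub_le_iff.2 ⟨h1, h2⟩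
    rw [Real.coe_toNNReal C hC0]
    exact habs.trans (hC _)
  exact hlip.continuous

lemma aux_c0 (hd : 1 ≤ d) (𝔑 : AdaptedNorm d A B) :
    ∃ c₀ : ℝ, 0 < c₀ ∧ ∀ v, c₀ * ‖v‖ ≤ 𝔑.N v := by
  haveI : Nonempty (Fin d) := ⟨⟨0, hd⟩⟩
  have hne : (Metric.sphere (0 : Fin d → ℝ) 1).Nonempty := by
    refine ⟨fun _ => 1, ?_⟩
    simp [Metric.mem_sphere, dist_eq_norm]
  obtain ⟨x₀, hx₀, hmin'⟩ :=
    (isCompact_sphere (0 : Fin d → ℝ) 1).exists_isMinOn hne (aux_N_cont 𝔑).continuousOn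
  have hmin : ∀ z ∈ Metric.sphere (0 : Fin d → ℝ) 1, 𝔑.N x₀ ≤ 𝔑.N z := fun z hz => hmin' hz
  have hx₀norm : ‖x₀‖ = 1 := by simpa [dist_eq_norm] using hx₀
  have hx₀ne : x₀ ≠ 0 := by
    intro h; rw [h] at hx₀norm; simp at hx₀norm
  have hc0 : 0 < 𝔑.N x₀ :=
    lt_of_le_of_ne (𝔑.nonneg x₀) fun h => hx₀ne ((𝔑.eq_zero_iff x₀).1 h.symm)
  refine ⟨𝔑.N x₀, hc0, fun v => ?_⟩
  rcases eq_or_ne v 0 with rfl | hv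
  · simp [aux_N_zero]
  · have hn : 0 < ‖v‖ := norm_pos_iff.2 hv
    have hmem : ‖v‖⁻¹ • v ∈ Metric.sphere (0 : Fin d → ℝ) 1 := by
      simp [dist_eq_norm, norm_smul, abs_of_pos (inv_pos.2 hn), inv_mul_cancel₀ hn.ne']
    have hm := hmin _ hmem
    rw [𝔑.norm_smul, abs_of_pos (inv_pos.2 hn)] at hm
    rw [← le_div_iff₀ hn, div_eq_inv_mul]
    exact hm

/-- Vectors all of whose coordinates become integers after multiplication by `Q`. -/
def IsRatVec {d : ℕ} (Q : ℤ) (v : Fin d → ℝ) : Prop :=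
  ∀ i, ∃ z : ℤ, (Q : ℝ) * v i = z

lemma isRatVec_mulVec {Q : ℤ} {v : Fin d → ℝ} (M : Matrix (Fin d) (Fin d) ℤ)
    (h : IsRatVec Q v) : IsRatVec Q ((matR M).mulVec v) := by
  intro i
  choose z hz using h
  refine ⟨∑ j, M i j * z j, ?_⟩
  have happ : (matR M).mulVec v i = ∑ j, (M i j : ℝ) * v j := by
    simp [matR, Matrix.mulVec, dotProduct]
  rw [happ, Finset.mul_sum]
  push_cast
  refine Finset.sum_congr rfl fun j _ => ?_
  rw [mul_left_comm, hz j]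

lemma isRatVec_iter {Q : ℤ} {v : Fin d → ℝ} (M : Matrix (Fin d) (Fin d) ℤ)
    (h : IsRatVec Q v) (k : ℕ) : IsRatVec Q (((matR M).mulVec)^[k] v) := by
  induction k with
  | zero => simpa
  | succ k ih => rw [Function.iterate_succ_apply']; exact isRatVec_mulVec M ih

lemma norm_ge_of_isRatVec {Q : ℤ} (hQ : 0 < Q) {v : Fin d → ℝ} (h : IsRatVec Q v)
    (hv : v ≠ 0) : 1 / (Q : ℝ) ≤ ‖v‖ := by
  obtain ⟨i, hi⟩ : ∃ i, v i ≠ 0 := by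
    by_contra hc; push_neg at hc; exact hv (funext hc)
  obtain ⟨z, hz⟩ := h i
  have hQR : (0:ℝ) < (Q:ℝ) := by exact_mod_cast hQ
  have hz0 : z ≠ 0 := by
    intro h0
    rw [h0] at hz
    push_cast at hz
    exact hi (by
      have := mul_eq_zero.1 hz
      rcases this with h | h
      · exact absurd h hQR.ne'
      · exact h)
  have h1 : (1:ℝ) ≤ |(z:ℝ)| := by
    have := Int.one_le_abs hz0
    exact_mod_cast this
  have habs : |v i| = |(z:ℝ)| / (Q:ℝ) := by
    rw [eq_div_iff hQR.ne', mul_comm, ← abs_of_pos hQR, ← abs_mul, hz]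
  have h2 : 1/(Q:ℝ) ≤ |v i| := by
    rw [habs]
    gcongr
  refine h2.trans ?_
  simpa [Real.norm_eq_abs] using norm_le_pi_norm v i

lemma tproj_eq_iff (v u : Fin d → ℝ) :
    Tproj d v = Tproj d u ↔ ∀ i, ∃ z : ℤ, v i - u i = (z:ℝ) := by
  have h1 : Tproj d v = Tproj d u ↔ v - u ∈ intLattice d :=
    QuotientAddGroup.eq_iff_sub_mem
  rw [h1, intLattice, AddSubgroup.mem_pi]
  constructor
  · intro h i
    obtain ⟨z, hz⟩ := AddSubgroup.mem_zmultiples_iff.1 (h i (Set.mem_univ i))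
    refine ⟨z, ?_⟩
    have : v i - u i = (v - u) i := rfl
    rw [this, ← hz]; simp
  · intro h i _
    obtain ⟨z, hz⟩ := h i
    refine AddSubgroup.mem_zmultiples_iff.2 ⟨z, ?_⟩
    have : (v - u) i = v i - u i := rfl
    rw [this, hz]; simp

lemma iter_mulVec_add (M : Matrix (Fin d) (Fin d) ℝ) (k : ℕ) (x y : Fin d → ℝ) :
    (M.mulVec)^[k] (x + y) = (M.mulVec)^[k] x + (M.mulVec)^[k] y := by
  induction k with
  | zero => simp
  | succ k ih =>
      rw [Function.iterate_succ_apply', Function.iterate_succ_apply',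
        Function.iterate_succ_apply', ih, Matrix.mulVec_add]

lemma iter_mem_sub (M : Matrix (Fin d) (Fin d) ℝ) (E : Submodule ℝ (Fin d → ℝ))
    (hE : ∀ v ∈ E, M.mulVec v ∈ E) {v : Fin d → ℝ} (hv : v ∈ E) (k : ℕ) :
    (M.mulVec)^[k] v ∈ E := by
  induction k with
  | zero => simpa
  | succ k ih => rw [Function.iterate_succ_apply']; exact hE _ ih

lemma iter_contract_s (𝔑 : AdaptedNorm d A B) {v : Fin d → ℝ} (hv : v ∈ 𝔑.Es) (k : ℕ) :
    𝔑.N (((matR A).mulVec)^[k] v) ≤ 𝔑.lam ^ k * 𝔑.N v := by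
  induction k with
  | zero => simp
  | succ k ih =>
      rw [Function.iterate_succ_apply']
      have hmem : ((matR A).mulVec)^[k] v ∈ 𝔑.Es := iter_mem_sub _ _ 𝔑.EsInvA hv k
      calc 𝔑.N ((matR A).mulVec (((matR A).mulVec)^[k] v))
          ≤ 𝔑.lam * 𝔑.N (((matR A).mulVec)^[k] v) := 𝔑.contract_s _ hmem
        _ ≤ 𝔑.lam * (𝔑.lam ^ k * 𝔑.N v) := mul_le_mul_of_nonneg_left ih 𝔑.lam_nonneg
        _ = 𝔑.lam ^ (k+1) * 𝔑.N v := by ring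

lemma iter_bound_A (𝔑 : AdaptedNorm d A B) (v : Fin d → ℝ) (k : ℕ) :
    𝔑.N (((matR A).mulVec)^[k] v) ≤ (max 𝔑.cA 1) ^ k * 𝔑.N v := by
  have hc'0 : (0:ℝ) ≤ max 𝔑.cA 1 := le_trans zero_le_one (le_max_right _ _)
  induction k with
  | zero => simp
  | succ k ih =>
      rw [Function.iterate_succ_apply']
      calc 𝔑.N ((matR A).mulVec (((matR A).mulVec)^[k] v))
          ≤ 𝔑.cA * 𝔑.N (((matR A).mulVec)^[k] v) := 𝔑.boundA _
        _ ≤ (max 𝔑.cA 1) * 𝔑.N (((matR A).mulVec)^[k] v) :=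
            mul_le_mul_of_nonneg_right (le_max_left _ _) (𝔑.nonneg _)
        _ ≤ (max 𝔑.cA 1) * ((max 𝔑.cA 1) ^ k * 𝔑.N v) := mul_le_mul_of_nonneg_left ih hc'0
        _ = (max 𝔑.cA 1) ^ (k+1) * 𝔑.N v := by ring

lemma iter_ne_zero (hBA : B * A = 1) {v : Fin d → ℝ} (hv : v ≠ 0) (k : ℕ) :
    ((matR A).mulVec)^[k] v ≠ 0 := by
  have hBAR : matR B * matR A = 1 := by
    have : (B * A).map (Int.castRingHom ℝ) = (1 : Matrix (Fin d) (Fin d) ℤ).map (Int.castRingHom ℝ) := by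
      rw [hBA]
    rw [Matrix.map_mul] at this
    simpa [matR, Matrix.map_one] using this
  have hinv : ∀ w : Fin d → ℝ, (matR B).mulVec ((matR A).mulVec w) = w := by
    intro w
    rw [Matrix.mulVec_mulVec, hBAR, Matrix.one_mulVec]
  induction k with
  | zero => simpa
  | succ k ih =>
      rw [Function.iterate_succ_apply']
      intro h
      apply ih
      have h2 := hinv (((matR A).mulVec)^[k] v)
      rw [h, Matrix.mulVec_zero] at h2
      exact h2.symm

end Statement14Aux

/-- **Lemma 3.6** (unstable component lower bound): there are `c₁, c₂ > 0` such that for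
large `n` coprime with the `a_i`, if `ρ ∈ (ℤ/nℤ)^d ∖ {0}` and `y` is a point of `W` or a
point `ρ'/n ≠ ρ/n`, then either `d(ρ/n, y) ≥ ε`, or the representative `v` of `ρ/n − y` in
`B(0,ε)` has unstable component `‖v_u‖ ≥ c₁/n^{c₂}`. -/
theorem statement14
    (d : ℕ) (hd : 1 ≤ d)
    (A B : Matrix (Fin d) (Fin d) ℤ) (hAB : A * B = 1) (hBA : B * A = 1)
    (hhyp : IsHyperbolic A)
    (𝔑 : AdaptedNorm d A B)
    (a : Fin d → ℤ) (ha : ∀ i, 0 < a i)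
    (hWinv : ∀ w ∈ ratPoints d a, tmap A w ∈ ratPoints d a)
    (ε : ℝ) (hε : 0 < ε)
    (hinj : Set.InjOn (⇑(Tproj d)) {v | 𝔑.N v < ε * max 𝔑.cA 𝔑.cB}) :
    ∃ c₁ : ℝ, 0 < c₁ ∧ ∃ c₂ : ℝ, 0 < c₂ ∧ ∃ N₀ : ℕ, ∀ n : ℕ, N₀ ≤ n →
      (∀ i, IsCoprime (n : ℤ) (a i)) →
      ∀ ρ : Fin d → ZMod n, ρ ≠ 0 →
      ∀ y : Torus d,
        (y ∈ ratPoints d a ∨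
          ∃ ρ' : Fin d → ZMod n, ρ' ≠ 0 ∧ y = zmodPoint d n ρ' ∧ y ≠ zmodPoint d n ρ) →
        (ε ≤ qdist 𝔑.N (zmodPoint d n ρ) y ∨
          ∀ v vs vu : Fin d → ℝ,
            Tproj d v = zmodPoint d n ρ - y → 𝔑.N v < ε →
            vs ∈ 𝔑.Es → vu ∈ 𝔑.Eu → v = vs + vu →
            c₁ / (n : ℝ) ^ c₂ ≤ 𝔑.N vu) := by
  classical
  obtain ⟨c₀', hc₀'pos, hc₀'⟩ := aux_c0 hd 𝔑
  set c₀ : ℝ := min c₀' ε with hc₀def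
  have hc₀pos : 0 < c₀ := lt_min hc₀'pos hε
  have hc₀le : ∀ v, c₀ * ‖v‖ ≤ 𝔑.N v := fun v =>
    le_trans (mul_le_mul_of_nonneg_right (min_le_left _ _) (norm_nonneg v)) (hc₀' v)
  have hc₀ε : c₀ ≤ ε := min_le_right _ _
  set L : ℤ := ∏ i, a i with hLdef
  have hLpos : 0 < L := Finset.prod_pos fun i _ => ha i
  have hLR : (0:ℝ) < (L:ℝ) := by exact_mod_cast hLpos
  have hL1 : (1:ℝ) ≤ (L:ℝ) := by exact_mod_cast hLpos
  set lam' : ℝ := max 𝔑.lam (1/2) with hlam'def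
  have hlam'lt : lam' < 1 := max_lt 𝔑.lam_lt_one (by norm_num)
  have hlam'pos : 0 < lam' := lt_of_lt_of_le (by norm_num) (le_max_right _ _)
  set c' : ℝ := max 𝔑.cA 1 with hc'def
  have hc'1 : 1 ≤ c' := le_max_right _ _
  have hc'pos : 0 < c' := lt_of_lt_of_le one_pos hc'1
  set β : ℝ := -Real.log lam' with hβdef
  have hβpos : 0 < β := by
    have := Real.log_neg hlam'pos hlam'lt
    simp only [hβdef]; linarith
  set γ : ℝ := Real.log c' / β with hγdef
  have hγ0 : 0 ≤ γ := div_nonneg (Real.log_nonneg hc'1) hβpos.le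
  set M : ℝ := ε * (L:ℝ) / c₀ with hMdef
  have hM1 : 1 ≤ M := by
    rw [hMdef, le_div_iff₀ hc₀pos, one_mul]
    calc c₀ ≤ ε := hc₀ε
      _ = ε * 1 := (mul_one ε).symm
      _ ≤ ε * (L:ℝ) := by
          exact mul_le_mul_of_nonneg_left hL1 hε.le
  have hMpos : 0 < M := lt_of_lt_of_le one_pos hM1
  have hMγpos : 0 < M ^ γ := Real.rpow_pos_of_pos hMpos γ
  clear_value c₀ L lam' c' β γ M
  refine ⟨c₀ / ((L:ℝ) * M ^ γ * c' ^ 2), ?_, 1 + γ, by linarith, 1, ?_⟩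
  · exact div_pos hc₀pos (mul_pos (mul_pos hLR hMγpos) (pow_pos hc'pos 2))
  intro n hn hcop ρ hρ y hy
  haveI : NeZero n := ⟨by omega⟩
  have hnR : (1:ℝ) ≤ (n:ℝ) := by exact_mod_cast hn
  have hnpos : (0:ℝ) < (n:ℝ) := lt_of_lt_of_le one_pos hnR
  have hn0 : (n:ℝ) ≠ 0 := hnpos.ne'
  right
  intro v vs vu hvproj hvε hvs hvu hvsum
  -- `ρ/n ≠ y`
  have hρi : ∃ i, ρ i ≠ 0 := by
    by_contra hc; push_neg at hc; exact hρ (funext hc)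
  have hyneq : zmodPoint d n ρ ≠ y := by
    rcases hy with ⟨kv, hkv⟩ | ⟨ρ', hρ', hyeq, hyne⟩
    · intro heq
      have heq2 : Tproj d (fun i => ((ρ i).val : ℝ)/(n:ℝ)) =
          Tproj d (fun i => (kv i : ℝ)/(a i : ℝ)) := by
        rw [← hkv]; exact heq
      have h := (tproj_eq_iff _ _).1 heq2
      obtain ⟨i, hi⟩ := hρi
      obtain ⟨z, hz⟩ := h i
      have han : ((a i : ℝ)) ≠ 0 := by
        have := ha i; positivity
      have h2 : (a i : ℝ) * ((ρ i).val : ℝ) = (n:ℝ) * ((kv i : ℝ) + (a i : ℝ) * z) := by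
        have h2' : ((ρ i).val : ℝ)/(n:ℝ) = (kv i : ℝ)/(a i : ℝ) + z := by linarith
        have h3' : ((ρ i).val : ℝ) = ((kv i : ℝ)/(a i : ℝ) + z) * (n:ℝ) := by
          rw [← h2', div_mul_cancel₀ _ hn0]
        rw [h3']
        field_simp
      have h3 : (a i) * (((ρ i).val : ℕ) : ℤ) = (n:ℤ) * (kv i + (a i) * z) := by
        exact_mod_cast h2
      have hdvd : (n:ℤ) ∣ (a i) * (((ρ i).val : ℕ) : ℤ) := ⟨kv i + (a i) * z, h3⟩
      have hdvd2 : (n:ℤ) ∣ (((ρ i).val : ℕ) : ℤ) := (hcop i).dvd_of_dvd_mul_left hdvd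
      have hdvd3 : n ∣ (ρ i).val := by exact_mod_cast hdvd2
      have hlt : (ρ i).val < n := ZMod.val_lt (ρ i)
      have : (ρ i).val = 0 := Nat.eq_zero_of_dvd_of_lt hdvd3 hlt
      exact hi ((ZMod.val_eq_zero (ρ i)).1 this)
    · exact fun heq => hyne heq.symm
  have hvne : v ≠ 0 := by
    intro h0
    apply hyneq
    have h1 : Tproj d v = 0 := by rw [h0, map_zero]
    rw [hvproj] at h1
    exact (sub_eq_zero.1 h1)
  -- rationality of v
  have hrat : IsRatVec ((n:ℤ) * L) v := by
    have hu : ∃ u : Fin d → ℝ, Tproj d u = zmodPoint d n ρ - y ∧ IsRatVec ((n:ℤ) * L) u := by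
      rcases hy with ⟨kv, hkv⟩ | ⟨ρ', hρ', hyeq, hyne⟩
      · refine ⟨(fun i => ((ρ i).val : ℝ)/(n:ℝ)) - (fun i => (kv i : ℝ)/(a i : ℝ)), ?_, ?_⟩
        · rw [map_sub, hkv]; rfl
        · intro i
          obtain ⟨Mi, hMi⟩ := Finset.dvd_prod_of_mem a (Finset.mem_univ i)
          rw [← hLdef] at hMi
          refine ⟨L * (((ρ i).val : ℕ) : ℤ) - (n:ℤ) * Mi * kv i, ?_⟩
          have han : ((a i : ℝ)) ≠ 0 := by have := ha i; positivity
          have hMiR : (L:ℝ) = (a i : ℝ) * (Mi : ℝ) := by exact_mod_cast hMi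
          have happ : ((fun i => ((ρ i).val : ℝ)/(n:ℝ)) - (fun i => (kv i : ℝ)/(a i : ℝ))) i
              = ((ρ i).val : ℝ)/(n:ℝ) - (kv i : ℝ)/(a i : ℝ) := rfl
          rw [happ]
          push_cast
          rw [hMiR]
          field_simp
      · refine ⟨(fun i => ((ρ i).val : ℝ)/(n:ℝ)) - (fun i => ((ρ' i).val : ℝ)/(n:ℝ)), ?_, ?_⟩
        · rw [map_sub, hyeq]; rfl
        · intro i
          refine ⟨L * (((ρ i).val : ℕ) : ℤ) - L * (((ρ' i).val : ℕ) : ℤ), ?_⟩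
          have happ : ((fun i => ((ρ i).val : ℝ)/(n:ℝ)) - (fun i => ((ρ' i).val : ℝ)/(n:ℝ))) i
              = ((ρ i).val : ℝ)/(n:ℝ) - ((ρ' i).val : ℝ)/(n:ℝ) := rfl
          rw [happ]
          push_cast
          field_simp
    obtain ⟨u, hu1, hu2⟩ := hu
    have hdiff := (tproj_eq_iff v u).1 (by rw [hvproj, hu1])
    intro i
    obtain ⟨z, hz⟩ := hdiff i
    obtain ⟨w, hw⟩ := hu2 i
    refine ⟨w + (n:ℤ) * L * z, ?_⟩
    have hvi : v i = u i + (z:ℝ) := by linarith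
    rw [hvi]
    push_cast
    push_cast at hw
    rw [mul_add, hw]
  -- decomposition bounds
  have hNv : 𝔑.N v = max (𝔑.N vs) (𝔑.N vu) := by
    rw [hvsum]; exact 𝔑.adapted vs hvs vu hvu
  have hNvs : 𝔑.N vs < ε := lt_of_le_of_lt (le_max_left _ _) (by rw [← hNv]; exact hvε)
  -- choice of k
  set x : ℝ := Real.log ((n:ℝ) * M) / β with hxdef
  have hnM1 : (1:ℝ) ≤ (n:ℝ) * M := by nlinarith
  have hnMpos : (0:ℝ) < (n:ℝ) * M := lt_of_lt_of_le one_pos hnM1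
  have hx0 : 0 ≤ x := div_nonneg (Real.log_nonneg hnM1) hβpos.le
  set k : ℕ := ⌈x⌉₊ + 1 with hkdef
  have hk_lb : x < (k:ℝ) := by
    have h := Nat.le_ceil x
    have : ((⌈x⌉₊ : ℝ)) < (k:ℝ) := by rw [hkdef]; push_cast; linarith
    linarith
  have hk_ub : (k:ℝ) < x + 2 := by
    have h := Nat.ceil_lt_add_one hx0
    rw [hkdef]; push_cast; linarith
  clear_value x k
  -- the iterated vector
  set w : Fin d → ℝ := ((matR A).mulVec)^[k] v with hwdef
  clear_value w
  have hw_rat : IsRatVec ((n:ℤ) * L) w := by rw [hwdef]; exact isRatVec_iter A hrat k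
  have hw_ne : w ≠ 0 := by rw [hwdef]; exact iter_ne_zero hBA hvne k
  have hnLpos : (0:ℤ) < (n:ℤ) * L := mul_pos (by exact_mod_cast (by omega : 0 < n)) hLpos
  have h_lb : 1 / ((n:ℝ) * (L:ℝ)) ≤ ‖w‖ := by
    have h := norm_ge_of_isRatVec hnLpos hw_rat hw_ne
    push_cast at h
    exact h
  have h1 : c₀ / ((n:ℝ) * (L:ℝ)) ≤ 𝔑.N w := by
    calc c₀ / ((n:ℝ) * (L:ℝ)) = c₀ * (1/((n:ℝ) * (L:ℝ))) := by ring
      _ ≤ c₀ * ‖w‖ := mul_le_mul_of_nonneg_left h_lb hc₀pos.le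
      _ ≤ 𝔑.N w := hc₀le w
  have hw_split : w = ((matR A).mulVec)^[k] vs + ((matR A).mulVec)^[k] vu := by
    rw [hwdef, hvsum, iter_mulVec_add]
  have hws_mem : ((matR A).mulVec)^[k] vs ∈ 𝔑.Es := iter_mem_sub _ _ 𝔑.EsInvA hvs k
  have hwu_mem : ((matR A).mulVec)^[k] vu ∈ 𝔑.Eu := iter_mem_sub _ _ 𝔑.EuInvA hvu k
  have hmax : 𝔑.N w = max (𝔑.N (((matR A).mulVec)^[k] vs)) (𝔑.N (((matR A).mulVec)^[k] vu)) := by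
    rw [hw_split]; exact 𝔑.adapted _ hws_mem _ hwu_mem
  have hws : 𝔑.N (((matR A).mulVec)^[k] vs) ≤ lam' ^ k * ε := by
    calc 𝔑.N (((matR A).mulVec)^[k] vs) ≤ 𝔑.lam ^ k * 𝔑.N vs := iter_contract_s 𝔑 hvs k
      _ ≤ lam' ^ k * ε := by
          have hlamle : 𝔑.lam ≤ lam' := by rw [hlam'def]; exact le_max_left _ _
          exact mul_le_mul (pow_le_pow_left₀ 𝔑.lam_nonneg hlamle k) hNvs.le
            (𝔑.nonneg _) (pow_nonneg hlam'pos.le k)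
  -- analytic estimate
  have hkey : lam' ^ k * ε < c₀ / ((n:ℝ) * (L:ℝ)) := by
    have hlam'k : lam' ^ k = Real.exp ((k:ℝ) * Real.log lam') := by
      rw [Real.exp_nat_mul, Real.exp_log hlam'pos]
    have hlogeq : Real.log ((n:ℝ) * M) = x * β := by
      rw [hxdef, div_mul_cancel₀ _ hβpos.ne']
    have hloglam : Real.log lam' = -β := by rw [hβdef, neg_neg]
    have h2 : (k:ℝ) * Real.log lam' < -Real.log ((n:ℝ) * M) := by
      rw [hloglam, hlogeq]
      have hm := mul_lt_mul_of_pos_right hk_lb hβpos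
      linarith
    have h3 : lam' ^ k < 1/((n:ℝ) * M) := by
      rw [hlam'k]
      calc Real.exp ((k:ℝ) * Real.log lam') < Real.exp (-(Real.log ((n:ℝ) * M))) :=
            Real.exp_lt_exp.2 h2
        _ = ((n:ℝ) * M)⁻¹ := by rw [Real.exp_neg, Real.exp_log hnMpos]
        _ = 1/((n:ℝ) * M) := (one_div _).symm
    have heq : ε / ((n:ℝ) * M) = c₀ / ((n:ℝ) * (L:ℝ)) := by
      rw [hMdef]
      field_simp
    calc lam' ^ k * ε < (1/((n:ℝ) * M)) * ε := mul_lt_mul_of_pos_right h3 hε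
      _ = ε / ((n:ℝ) * M) := by ring
      _ = c₀ / ((n:ℝ) * (L:ℝ)) := heq
  have h4 : c₀ / ((n:ℝ) * (L:ℝ)) ≤ 𝔑.N (((matR A).mulVec)^[k] vu) := by
    rcases le_max_iff.1 (hmax ▸ h1) with h | h
    · exact absurd (h.trans hws) (not_le.2 hkey)
    · exact h
  have h5 : c₀ / ((n:ℝ) * (L:ℝ)) ≤ c' ^ k * 𝔑.N vu := by
    refine h4.trans ?_
    rw [hc'def]
    exact iter_bound_A 𝔑 vu k
  -- bound on c'^k
  have h6 : c' ^ k ≤ (n:ℝ) ^ γ * M ^ γ * c' ^ 2 := by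
    have h7 : c' ^ k = Real.exp ((k:ℝ) * Real.log c') := by
      rw [Real.exp_nat_mul, Real.exp_log hc'pos]
    have h8 : (k:ℝ) * Real.log c' ≤ (x + 2) * Real.log c' :=
      mul_le_mul_of_nonneg_right hk_ub.le (Real.log_nonneg hc'1)
    have h9 : (x + 2) * Real.log c' = γ * Real.log ((n:ℝ) * M) + 2 * Real.log c' := by
      rw [hxdef, hγdef]
      field_simp
    have h10 : Real.exp (2 * Real.log c') = c' ^ 2 := by
      rw [show (2:ℝ) = ((2:ℕ):ℝ) by norm_num, Real.exp_nat_mul, Real.exp_log hc'pos]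
    calc c' ^ k = Real.exp ((k:ℝ) * Real.log c') := h7
      _ ≤ Real.exp ((x + 2) * Real.log c') := Real.exp_le_exp.2 h8
      _ = Real.exp (γ * Real.log ((n:ℝ) * M)) * Real.exp (2 * Real.log c') := by
          rw [h9, Real.exp_add]
      _ = ((n:ℝ) * M) ^ γ * c' ^ 2 := by
          rw [Real.rpow_def_of_pos hnMpos, mul_comm (Real.log ((n:ℝ) * M)) γ, h10]
      _ = (n:ℝ) ^ γ * M ^ γ * c' ^ 2 := by
          rw [Real.mul_rpow hnpos.le hMpos.le]
  -- conclusion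
  have hNvu : c₀ / ((n:ℝ) * (L:ℝ)) / c' ^ k ≤ 𝔑.N vu := by
    rw [div_le_iff₀ (pow_pos hc'pos k)]
    calc c₀ / ((n:ℝ) * (L:ℝ)) ≤ c' ^ k * 𝔑.N vu := h5
      _ = 𝔑.N vu * c' ^ k := mul_comm _ _
  have hrpow : (n:ℝ) ^ (1 + γ) = (n:ℝ) * (n:ℝ) ^ γ := by
    rw [Real.rpow_add hnpos, Real.rpow_one]
  have hnγpos : 0 < (n:ℝ) ^ γ := Real.rpow_pos_of_pos hnpos γ
  calc c₀ / ((L:ℝ) * M ^ γ * c' ^ 2) / (n:ℝ) ^ (1 + γ)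
      = c₀ / ((n:ℝ) * (L:ℝ) * ((n:ℝ) ^ γ * M ^ γ * c' ^ 2)) := by
        rw [hrpow, div_div]; ring_nf
    _ ≤ c₀ / ((n:ℝ) * (L:ℝ) * c' ^ k) := by
        apply div_le_div_of_nonneg_left hc₀pos.le
        · exact mul_pos (mul_pos hnpos hLR) (pow_pos hc'pos k)
        · exact mul_le_mul_of_nonneg_left h6 (mul_pos hnpos hLR).le
    _ = c₀ / ((n:ℝ) * (L:ℝ)) / c' ^ k := by rw [div_div]
    _ ≤ 𝔑.N vu := hNvu

end
end

section
/- Let d ≥ 1, n ≥ 1, μ a finitely supported probability measure on ℤ^d, and A ∈ GL_d(ℤ). Let N ⊆ (ℤ/nℤ)^d be the image of H under the reduction map ℤ^d → (ℤ/nℤ)^d. Then N = ⋃_{k≥0} (supp P^k − supp P^k), where supp P^k − supp P^k := {x − y : x, y ∈ supp P^k} and P^k is the law of the affine random walk at time k. -/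
noncomputable section

open scoped BigOperators

/-- Reduction of an integer vector modulo `n`. -/
def redMod (d n : ℕ) (v : Fin d → ℤ) : Fin d → ZMod n := fun i => (v i : ZMod n)

/-- The law `P^t(0,·)` of the affine random walk `X_t = A X_{t-1} + B_t mod n`, `X_0 = 0`,
expressed using the integer inverse `B` of the matrix `A`:
`P^{t+1}(x) = ∑_b μ(b) P^t(A⁻¹(x - b))`.  (`μ` has finite support contained in `S`.) -/
def walkLaw (d n : ℕ) (B : Matrix (Fin d) (Fin d) ℤ)
    (S : Finset (Fin d → ℤ)) (μ : (Fin d → ℤ) → ℝ) : ℕ → (Fin d → ZMod n) → ℝ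
  | 0, x => if x = 0 then 1 else 0
  | t + 1, x => ∑ b ∈ S, μ b *
      walkLaw d n B S μ t ((B.map (Int.cast : ℤ → ZMod n)).mulVec (x - redMod d n b))

/-- Total variation distance `(1/2) ∑_x |p x − q x|`. -/
def tvDist {X : Type*} (p q : X → ℝ) : ℝ := (1 / 2) * ∑' x, |p x - q x|

/-- Componentwise reduction `ℤ^d → (ℤ/nℤ)^d` as an additive group homomorphism. -/
def redHom (d n : ℕ) : (Fin d → ℤ) →+ (Fin d → ZMod n) where
  toFun := fun v i => (v i : ZMod n)
  map_zero' := by funext i; simp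
  map_add' := by intro v w; funext i; simp

namespace Claim1Aux

variable {d n : ℕ} {A B : Matrix (Fin d) (Fin d) ℤ}
  {S : Finset (Fin d → ℤ)} {μ : (Fin d → ℤ) → ℝ}

lemma redHom_apply (v : Fin d → ℤ) (i : Fin d) : redHom d n v i = (v i : ZMod n) := rfl

lemma redMod_eq_redHom (v : Fin d → ℤ) : redMod d n v = redHom d n v := rfl

lemma mapcast_mul (A B : Matrix (Fin d) (Fin d) ℤ) :
    ((A * B).map (Int.cast : ℤ → ZMod n)) = A.map Int.cast * B.map Int.cast := by
  have := Matrix.map_mul (L := A) (M := B) (f := Int.castRingHom (ZMod n))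
  simpa using this

lemma An_Bn (hAB : A * B = 1) :
    (A.map (Int.cast : ℤ → ZMod n)) * (B.map (Int.cast : ℤ → ZMod n)) = 1 := by
  rw [← mapcast_mul, hAB]
  exact Matrix.map_one _ (by simp) (by simp)

lemma redHom_mulVec (A : Matrix (Fin d) (Fin d) ℤ) (v : Fin d → ℤ) :
    (A.map (Int.cast : ℤ → ZMod n)).mulVec (redHom d n v) = redHom d n (A.mulVec v) := by
  funext i
  have := RingHom.map_mulVec (Int.castRingHom (ZMod n)) A v i
  simp only [Int.coe_castRingHom] at this
  exact this.symm

lemma wl_nonneg (hμ0 : ∀ v, 0 ≤ μ v) : ∀ t x, 0 ≤ walkLaw d n B S μ t x := by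
  intro t
  induction t with
  | zero =>
    intro x
    simp only [walkLaw]
    split <;> norm_num
  | succ t ih =>
    intro x
    simp only [walkLaw]
    exact Finset.sum_nonneg fun b _ => mul_nonneg (hμ0 b) (ih _)

lemma wl_zero_ne {x : Fin d → ZMod n} : walkLaw d n B S μ 0 x ≠ 0 ↔ x = 0 := by
  rcases eq_or_ne x 0 with h | h <;> simp [walkLaw, h]

lemma wl_succ_ne (hμ0 : ∀ v, 0 ≤ μ v) (hμS : ∀ v, v ∉ S → μ v = 0)
    (hAB : A * B = 1) (hBA : B * A = 1) {t : ℕ} {x : Fin d → ZMod n} :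
    walkLaw d n B S μ (t + 1) x ≠ 0 ↔
      ∃ b y, μ b ≠ 0 ∧ walkLaw d n B S μ t y ≠ 0 ∧
        x = (A.map (Int.cast : ℤ → ZMod n)).mulVec y + redMod d n b := by
  constructor
  · intro h
    simp only [walkLaw] at h
    obtain ⟨b, hbS, hb⟩ := Finset.exists_ne_zero_of_sum_ne_zero h
    refine ⟨b, (B.map (Int.cast : ℤ → ZMod n)).mulVec (x - redMod d n b),
      fun h0 => hb (by rw [h0, zero_mul]), fun h0 => hb (by rw [h0, mul_zero]), ?_⟩
    have : (A.map (Int.cast : ℤ → ZMod n)).mulVec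
        ((B.map (Int.cast : ℤ → ZMod n)).mulVec (x - redMod d n b)) = x - redMod d n b := by
      rw [Matrix.mulVec_mulVec, An_Bn hAB, Matrix.one_mulVec]
    rw [this, sub_add_cancel]
  · rintro ⟨b, y, hb, hy, rfl⟩
    have hbS : b ∈ S := by by_contra hc; exact hb (hμS b hc)
    simp only [walkLaw]
    intro h0
    have hall := (Finset.sum_eq_zero_iff_of_nonneg
      (fun c _ => mul_nonneg (hμ0 c) (wl_nonneg hμ0 t _))).1 h0 b hbS
    have hBy : (B.map (Int.cast : ℤ → ZMod n)).mulVec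
        ((A.map (Int.cast : ℤ → ZMod n)).mulVec y + redMod d n b - redMod d n b) = y := by
      rw [add_sub_cancel_right, Matrix.mulVec_mulVec, An_Bn hBA, Matrix.one_mulVec]
    rw [hBy] at hall
    rcases mul_eq_zero.1 hall with h | h
    · exact hb h
    · exact hy h

lemma exists_mu_ne (hμ1 : ∑ v ∈ S, μ v = 1) : ∃ b, b ∈ S ∧ μ b ≠ 0 := by
  obtain ⟨b, hbS, hb⟩ := Finset.exists_ne_zero_of_sum_ne_zero
    (show ∑ v ∈ S, μ v ≠ 0 by rw [hμ1]; exact one_ne_zero)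
  exact ⟨b, hbS, hb⟩

lemma supp_nonempty (hμ0 : ∀ v, 0 ≤ μ v) (hμ1 : ∑ v ∈ S, μ v = 1)
    (hμS : ∀ v, v ∉ S → μ v = 0) (hAB : A * B = 1) (hBA : B * A = 1) :
    ∀ t, ∃ x, walkLaw d n B S μ t x ≠ 0 := by
  intro t
  induction t with
  | zero => exact ⟨0, wl_zero_ne.2 rfl⟩
  | succ t ih =>
    obtain ⟨y, hy⟩ := ih
    obtain ⟨b, _, hb⟩ := exists_mu_ne hμ1
    exact ⟨(A.map (Int.cast : ℤ → ZMod n)).mulVec y + redMod d n b,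
      (wl_succ_ne hμ0 hμS hAB hBA).2 ⟨b, y, hb, hy, rfl⟩⟩

/-- The difference set of the support of `P^k`. -/
def DS (d n : ℕ) (B : Matrix (Fin d) (Fin d) ℤ) (S : Finset (Fin d → ℤ))
    (μ : (Fin d → ℤ) → ℝ) (k : ℕ) : Set (Fin d → ZMod n) :=
  {z : Fin d → ZMod n | ∃ x y : Fin d → ZMod n,
    walkLaw d n B S μ k x ≠ 0 ∧ walkLaw d n B S μ k y ≠ 0 ∧ z = x - y}

variable (hμ0 : ∀ v, 0 ≤ μ v) (hμ1 : ∑ v ∈ S, μ v = 1)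
  (hμS : ∀ v, v ∉ S → μ v = 0) (hAB : A * B = 1) (hBA : B * A = 1)

include hμ0 hμ1 hμS hAB hBA

lemma DS_zero_mem (k : ℕ) : (0 : Fin d → ZMod n) ∈ DS d n B S μ k := by
  obtain ⟨x, hx⟩ := supp_nonempty hμ0 hμ1 hμS hAB hBA k
  exact ⟨x, x, hx, hx, (sub_self x).symm⟩

omit hμ1 hAB hBA hμ0 hμS in
lemma DS_neg_mem {k : ℕ} {z : Fin d → ZMod n} (hz : z ∈ DS d n B S μ k) :
    -z ∈ DS d n B S μ k := by
  obtain ⟨x, y, hx, hy, rfl⟩ := hz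
  exact ⟨y, x, hy, hx, neg_sub x y⟩

lemma DS_Ashift {k : ℕ} {z : Fin d → ZMod n} (hz : z ∈ DS d n B S μ k) :
    (A.map (Int.cast : ℤ → ZMod n)).mulVec z ∈ DS d n B S μ (k + 1) := by
  obtain ⟨x, y, hx, hy, rfl⟩ := hz
  obtain ⟨b, _, hb⟩ := exists_mu_ne hμ1
  refine ⟨(A.map (Int.cast : ℤ → ZMod n)).mulVec x + redMod d n b,
    (A.map (Int.cast : ℤ → ZMod n)).mulVec y + redMod d n b,
    (wl_succ_ne hμ0 hμS hAB hBA).2 ⟨b, x, hb, hx, rfl⟩,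
    (wl_succ_ne hμ0 hμS hAB hBA).2 ⟨b, y, hb, hy, rfl⟩, ?_⟩
  rw [Matrix.mulVec_sub]
  abel

lemma DS_pow_shift {k : ℕ} {z : Fin d → ZMod n} (hz : z ∈ DS d n B S μ k) :
    ∀ m, ((A.map (Int.cast : ℤ → ZMod n)) ^ m).mulVec z ∈ DS d n B S μ (k + m) := by
  intro m
  induction m generalizing k z with
  | zero => simpa using hz
  | succ m ih =>
    have h1 := ih (DS_Ashift hμ0 hμ1 hμS hAB hBA hz)
    have heq : k + 1 + m = k + (m + 1) := by omega
    rw [heq] at h1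
    rw [pow_succ, ← Matrix.mulVec_mulVec]
    exact h1

omit hμ1 in
lemma DS_add_aux : ∀ (k : ℕ) (z : Fin d → ZMod n), z ∈ DS d n B S μ k →
    ∀ (l : ℕ) (w : Fin d → ZMod n), w ∈ DS d n B S μ l →
    ((A.map (Int.cast : ℤ → ZMod n)) ^ k).mulVec w + z ∈ DS d n B S μ (k + l) := by
  intro k
  induction k with
  | zero =>
    rintro z ⟨x, y, hx, hy, rfl⟩ l w hw
    rw [wl_zero_ne] at hx hy
    subst hx; subst hy
    simpa using hw
  | succ k ih =>
    rintro z ⟨x, y, hx, hy, rfl⟩ l w hw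
    obtain ⟨b, x₀, hb, hx₀, rfl⟩ := (wl_succ_ne hμ0 hμS hAB hBA).1 hx
    obtain ⟨b', y₀, hb', hy₀, rfl⟩ := (wl_succ_ne hμ0 hμS hAB hBA).1 hy
    obtain ⟨x₁, y₁, hx₁, hy₁, heq⟩ := ih (x₀ - y₀) ⟨x₀, y₀, hx₀, hy₀, rfl⟩ l w hw
    have hkl : k + 1 + l = k + l + 1 := by omega
    rw [hkl]
    refine ⟨(A.map (Int.cast : ℤ → ZMod n)).mulVec x₁ + redMod d n b,
      (A.map (Int.cast : ℤ → ZMod n)).mulVec y₁ + redMod d n b',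
      (wl_succ_ne hμ0 hμS hAB hBA).2 ⟨b, x₁, hb, hx₁, rfl⟩,
      (wl_succ_ne hμ0 hμS hAB hBA).2 ⟨b', y₁, hb', hy₁, rfl⟩, ?_⟩
    have h2 : (A.map (Int.cast : ℤ → ZMod n)).mulVec (x₁ - y₁)
        = ((A.map (Int.cast : ℤ → ZMod n)) ^ (k + 1)).mulVec w
          + (A.map (Int.cast : ℤ → ZMod n)).mulVec (x₀ - y₀) := by
      rw [← heq, Matrix.mulVec_add, pow_succ', ← Matrix.mulVec_mulVec]
    have h3 : (A.map (Int.cast : ℤ → ZMod n)).mulVec (x₁ - y₁)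
        = (A.map (Int.cast : ℤ → ZMod n)).mulVec x₁
          - (A.map (Int.cast : ℤ → ZMod n)).mulVec y₁ := Matrix.mulVec_sub _ _ _
    have h4 : (A.map (Int.cast : ℤ → ZMod n)).mulVec (x₀ - y₀)
        = (A.map (Int.cast : ℤ → ZMod n)).mulVec x₀
          - (A.map (Int.cast : ℤ → ZMod n)).mulVec y₀ := Matrix.mulVec_sub _ _ _
    rw [h3, h4] at h2
    calc ((A.map (Int.cast : ℤ → ZMod n)) ^ (k + 1)).mulVec w
          + ((A.map (Int.cast : ℤ → ZMod n)).mulVec x₀ + redMod d n b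
            - ((A.map (Int.cast : ℤ → ZMod n)).mulVec y₀ + redMod d n b'))
        = (((A.map (Int.cast : ℤ → ZMod n)) ^ (k + 1)).mulVec w
            + ((A.map (Int.cast : ℤ → ZMod n)).mulVec x₀
              - (A.map (Int.cast : ℤ → ZMod n)).mulVec y₀))
          + (redMod d n b - redMod d n b') := by abel
      _ = ((A.map (Int.cast : ℤ → ZMod n)).mulVec x₁
            - (A.map (Int.cast : ℤ → ZMod n)).mulVec y₁)
          + (redMod d n b - redMod d n b') := by rw [← h2]
      _ = (A.map (Int.cast : ℤ → ZMod n)).mulVec x₁ + redMod d n b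
          - ((A.map (Int.cast : ℤ → ZMod n)).mulVec y₁ + redMod d n b') := by abel

/-- The support difference-set union as an additive subgroup requires
closure under addition, proved via a power of `A` that is `1 mod n`. -/
lemma DS_add_closed (hn : 1 ≤ n) {k l : ℕ} {z w : Fin d → ZMod n}
    (hz : z ∈ DS d n B S μ k) (hw : w ∈ DS d n B S μ l) :
    ∃ m, z + w ∈ DS d n B S μ m := by
  haveI : NeZero n := ⟨by omega⟩
  let u : (Matrix (Fin d) (Fin d) (ZMod n))ˣ :=
    ⟨A.map (Int.cast : ℤ → ZMod n), B.map Int.cast, An_Bn hAB, An_Bn hBA⟩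
  obtain ⟨r, hrpos, hr⟩ : ∃ r, 0 < r ∧ (A.map (Int.cast : ℤ → ZMod n)) ^ r = 1 := by
    refine ⟨orderOf u, orderOf_pos u, ?_⟩
    have h1 := pow_orderOf_eq_one u
    have h2 : ((u ^ orderOf u : _ˣ) : Matrix (Fin d) (Fin d) (ZMod n))
        = (A.map (Int.cast : ℤ → ZMod n)) ^ orderOf u :=
      Units.val_pow_eq_pow_val u (orderOf u)
    rw [h1] at h2
    exact h2.symm
  -- shift w by A^(k*(r-1))
  have hw' := DS_pow_shift hμ0 hμ1 hμS hAB hBA hw (k * (r - 1))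
  have hadd := DS_add_aux hμ0 hμS hAB hBA k z hz _ _ hw'
  have hpow : ((A.map (Int.cast : ℤ → ZMod n)) ^ k).mulVec
      (((A.map (Int.cast : ℤ → ZMod n)) ^ (k * (r - 1))).mulVec w) = w := by
    rw [Matrix.mulVec_mulVec, ← pow_add]
    have hkr : k + k * (r - 1) = r * k := by
      have h1 : r - 1 + 1 = r := Nat.succ_pred_eq_of_pos hrpos
      calc k + k * (r - 1) = (r - 1 + 1) * k := by ring
        _ = r * k := by rw [h1]
    rw [hkr, pow_mul, hr, one_pow, Matrix.one_mulVec]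
  rw [hpow] at hadd
  exact ⟨k + (l + k * (r - 1)), by rwa [add_comm z w]⟩

omit hμ1 in
lemma supp_diff_mem_image (H : AddSubgroup (Fin d → ℤ))
    (hHdiff : ∀ x y, μ x ≠ 0 → μ y ≠ 0 → x - y ∈ H)
    (hHinv : ∀ h ∈ H, A.mulVec h ∈ H) :
    ∀ (k : ℕ) (x y : Fin d → ZMod n), walkLaw d n B S μ k x ≠ 0 →
      walkLaw d n B S μ k y ≠ 0 → ∃ h ∈ H, redHom d n h = x - y := by
  intro k
  induction k with
  | zero =>
    intro x y hx hy
    rw [wl_zero_ne] at hx hy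
    subst hx; subst hy
    exact ⟨0, H.zero_mem, by simp⟩
  | succ k ih =>
    intro x y hx hy
    obtain ⟨b, x₀, hb, hx₀, rfl⟩ := (wl_succ_ne hμ0 hμS hAB hBA).1 hx
    obtain ⟨b', y₀, hb', hy₀, rfl⟩ := (wl_succ_ne hμ0 hμS hAB hBA).1 hy
    obtain ⟨h, hH, hh⟩ := ih x₀ y₀ hx₀ hy₀
    refine ⟨A.mulVec h + (b - b'), H.add_mem (hHinv h hH) (hHdiff b b' hb hb'), ?_⟩
    rw [map_add, map_sub, ← redHom_mulVec, hh, Matrix.mulVec_sub,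
      redMod_eq_redHom, redMod_eq_redHom]
    abel

end Claim1Aux

/-- **Claim 1 in Proposition 4.1**: the image `N` of `H` in `(ℤ/nℤ)^d` equals
`⋃_{k ≥ 0} (supp P^k − supp P^k)`. -/
theorem statement17
    (d n : ℕ) (hd : 1 ≤ d) (hn : 1 ≤ n)
    (A B : Matrix (Fin d) (Fin d) ℤ) (hAB : A * B = 1) (hBA : B * A = 1)
    (S : Finset (Fin d → ℤ)) (μ : (Fin d → ℤ) → ℝ)
    (hμ0 : ∀ v, 0 ≤ μ v) (hμ1 : ∑ v ∈ S, μ v = 1) (hμS : ∀ v, v ∉ S → μ v = 0)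
    (H : AddSubgroup (Fin d → ℤ))
    (hHdiff : ∀ x y, μ x ≠ 0 → μ y ≠ 0 → x - y ∈ H)
    (hHinv : ∀ h ∈ H, A.mulVec h ∈ H)
    (hHmin : ∀ K : AddSubgroup (Fin d → ℤ),
        (∀ x y, μ x ≠ 0 → μ y ≠ 0 → x - y ∈ K) → (∀ h ∈ K, A.mulVec h ∈ K) → H ≤ K) :
    (AddSubgroup.map (redHom d n) H : Set (Fin d → ZMod n))
      = ⋃ k : ℕ, {z : Fin d → ZMod n | ∃ x y : Fin d → ZMod n,
          walkLaw d n B S μ k x ≠ 0 ∧ walkLaw d n B S μ k y ≠ 0 ∧ z = x - y} := by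
  classical
  have hUnion : (⋃ k : ℕ, {z : Fin d → ZMod n | ∃ x y : Fin d → ZMod n,
      walkLaw d n B S μ k x ≠ 0 ∧ walkLaw d n B S μ k y ≠ 0 ∧ z = x - y})
      = ⋃ k : ℕ, Claim1Aux.DS d n B S μ k := rfl
  rw [hUnion]
  -- the union is an additive subgroup
  let Usub : AddSubgroup (Fin d → ZMod n) :=
  { carrier := ⋃ k : ℕ, Claim1Aux.DS d n B S μ k
    zero_mem' := Set.mem_iUnion.2 ⟨0, Claim1Aux.DS_zero_mem hμ0 hμ1 hμS hAB hBA 0⟩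
    add_mem' := by
      intro a b ha hb
      obtain ⟨k, hk⟩ := Set.mem_iUnion.1 ha
      obtain ⟨l, hl⟩ := Set.mem_iUnion.1 hb
      obtain ⟨m, hm⟩ := Claim1Aux.DS_add_closed hμ0 hμ1 hμS hAB hBA hn hk hl
      exact Set.mem_iUnion.2 ⟨m, hm⟩
    neg_mem' := by
      intro a ha
      obtain ⟨k, hk⟩ := Set.mem_iUnion.1 ha
      exact Set.mem_iUnion.2 ⟨k, Claim1Aux.DS_neg_mem hk⟩ }
  apply Set.Subset.antisymm
  · -- image of H ⊆ union, via minimality of H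
    rintro z hz
    obtain ⟨h, hH, rfl⟩ := AddSubgroup.mem_map.1 hz
    have hK : H ≤ Usub.comap (redHom d n) := by
      apply hHmin
      · intro x y hx hy
        apply AddSubgroup.mem_comap.2
        show redHom d n (x - y) ∈ (⋃ k : ℕ, Claim1Aux.DS d n B S μ k)
        refine Set.mem_iUnion.2 ⟨1, redHom d n x, redHom d n y, ?_, ?_, by rw [map_sub]⟩
        · refine (Claim1Aux.wl_succ_ne hμ0 hμS hAB hBA).2 ⟨x, 0, hx, Claim1Aux.wl_zero_ne.2 rfl, ?_⟩
          rw [Matrix.mulVec_zero, zero_add]; rfl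
        · refine (Claim1Aux.wl_succ_ne hμ0 hμS hAB hBA).2 ⟨y, 0, hy, Claim1Aux.wl_zero_ne.2 rfl, ?_⟩
          rw [Matrix.mulVec_zero, zero_add]; rfl
      · intro h hh
        have hh' := AddSubgroup.mem_comap.1 hh
        obtain ⟨k, hk⟩ := Set.mem_iUnion.1 hh'
        apply AddSubgroup.mem_comap.2
        have := Claim1Aux.DS_Ashift hμ0 hμ1 hμS hAB hBA hk
        rw [Claim1Aux.redHom_mulVec] at this
        exact Set.mem_iUnion.2 ⟨k + 1, this⟩
    exact AddSubgroup.mem_comap.1 (hK hH)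
  · -- union ⊆ image of H
    rintro z hz
    obtain ⟨k, x, y, hx, hy, rfl⟩ := Set.mem_iUnion.1 hz
    obtain ⟨h, hH, hh⟩ := Claim1Aux.supp_diff_mem_image hμ0 hμS hAB hBA H hHdiff hHinv k x y hx hy
    exact AddSubgroup.mem_map.2 ⟨h, hH, hh⟩

end
end
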